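/- For n = 2^j ≥ 4, the descent set statistic satisfies β_n(S) ≡ (-1)^{|S \ {n/2}|} (mod 4) for every S ⊆ [n-1]. Consequently exactly half of the subsets S ⊆ [n-1] have β_n(S) ≡ 1 (mod 4) and the other half have β_n(S) ≡ 3 (mod 4). -/

import Mathlib

/-!
Since `α_n(T) = ∑_{U ⊆ T} β_n(U)`, Möbius inversion on the Boolean lattice gives
`β_n(S) = ∑_{T ⊆ S} (-1)^{|S \ T|} α_n(T)`.

If `t ∈ T`, then `α_n(T)` is divisible by `C(n, t)`: sorting permutations by the set of values
they take on the first `t` positions, all fibres have the same size, because relabelling the values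
order-preservingly inside and outside a `t`-subset keeps the descent set inside `T`.
For `n = 2^j` Kummer's theorem gives `v₂ C(n, t) = j - v₂ t`, so `4 ∣ C(n, t)` unless `t = n/2`,
and `C(n, n/2) ≡ 2 (mod 4)`. Hence modulo 4 only `T = ∅` and `T = {n/2}` survive, and
`β_n(S) ≡ (-1)^{|S|} + 2 [n/2 ∈ S] (-1)^{|S|-1} ≡ (-1)^{|S \ {n/2}|}`.

Toggling `1 ∈ S` flips the parity of `|S \ {n/2}|` (as `n/2 ≠ 1`), so the two residues are
taken equally often.
-/

open Finset

/-- The descent set of a permutation of `{1,…,n}` (written as a permutation of `Fin n`),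
as a subset of `[n-1] = {1,…,n-1}`: `i` is a descent if `π_i > π_{i+1}` (1-indexed). -/
def descSet (n : ℕ) (π : Equiv.Perm (Fin n)) : Finset ℕ :=
  (Finset.Icc 1 (n - 1)).filter (fun i =>
    ∃ h : i < n, π ⟨i, h⟩ < π ⟨i - 1, by omega⟩)

/-- `β_n(S)`: the number of permutations of `{1,…,n}` with descent set exactly `S`. -/
def descBeta (n : ℕ) (S : Finset ℕ) : ℕ :=
  (Finset.univ.filter (fun π : Equiv.Perm (Fin n) => descSet n π = S)).card

/-- `α_n(S)`: the number of permutations of `{1,…,n}` with descent set contained in `S`. -/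
def descAlpha (n : ℕ) (S : Finset ℕ) : ℕ :=
  (Finset.univ.filter (fun π : Equiv.Perm (Fin n) => descSet n π ⊆ S)).card

theorem Finset.sum_powerset_neg_one_pow_card_sdiff_mul_sum {α R : Type*} [DecidableEq α]
    [CommRing R] (f : Finset α → R) (S : Finset α) :
    ∑ T ∈ S.powerset, (-1 : R) ^ #(S \ T) * ∑ U ∈ T.powerset, f U = f S := by
  have inner : ∀ U ∈ S.powerset,
      ∑ T ∈ S.powerset with U ⊆ T, (-1 : R) ^ #(S \ T) = if U = S then 1 else 0 := by
    intro U hU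
    rw [mem_powerset] at hU
    have hcompl : ∑ T ∈ S.powerset with U ⊆ T, (-1 : R) ^ #(S \ T)
        = ∑ V ∈ (S \ U).powerset, (-1 : R) ^ #V := by
      refine sum_nbij' (S \ ·) (S \ ·) ?_ ?_ ?_ ?_ fun _ _ => rfl
      · intro T hT
        simp only [mem_filter, mem_powerset] at hT ⊢
        exact sdiff_subset_sdiff le_rfl hT.2
      · intro V hV
        simp only [mem_filter, mem_powerset] at hV ⊢
        exact ⟨sdiff_subset, fun x hx => mem_sdiff.mpr ⟨hU hx, fun h => (mem_sdiff.mp (hV h)).2 hx⟩⟩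
      · intro T hT
        simp only [mem_filter, mem_powerset] at hT
        exact sdiff_sdiff_eq_self hT.1
      · intro V hV
        rw [mem_powerset] at hV
        exact sdiff_sdiff_eq_self (hV.trans sdiff_subset)
    have hsign := congrArg (Int.cast : ℤ → R) (sum_powerset_neg_one_pow_card (x := S \ U))
    push_cast at hsign
    rw [hcompl, hsign]
    exact if_congr (sdiff_eq_empty_iff_subset.trans ⟨hU.antisymm, fun h => h.ge⟩) rfl rfl
  calc ∑ T ∈ S.powerset, (-1 : R) ^ #(S \ T) * ∑ U ∈ T.powerset, f U
      = ∑ U ∈ S.powerset, (∑ T ∈ S.powerset with U ⊆ T, (-1 : R) ^ #(S \ T)) * f U := by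
        simp_rw [mul_sum, sum_mul]
        refine sum_comm' fun T U => ?_
        simp only [mem_powerset, mem_filter]
        exact ⟨fun ⟨hT, hU⟩ => ⟨⟨hT, hU⟩, hU.trans hT⟩, fun ⟨h, _⟩ => h⟩
    _ = f S := by
        rw [sum_congr rfl fun U hU => by rw [inner U hU]]
        simp

theorem Finset.card_powerset_filter_of_insert_iff_not {α : Type*} [DecidableEq α]
    {E : Finset α} {a : α} (ha : a ∈ E) (P : Finset α → Prop) [DecidablePred P]
    (hP : ∀ S ⊆ E.erase a, P (insert a S) ↔ ¬ P S) :
    #{S ∈ E.powerset | P S} = 2 ^ (#E - 1) := by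
  rw [← insert_erase ha, card_filter, sum_powerset_insert (notMem_erase a E),
    card_insert_of_notMem (notMem_erase a E), Nat.add_sub_cancel, ← sum_add_distrib,
    ← card_powerset, card_eq_sum_ones]
  refine sum_congr rfl fun S hS => ?_
  simp only [hP S (mem_powerset.mp hS)]
  split_ifs <;> rfl

theorem Finset.even_card_sdiff_insert_iff {α : Type*} [DecidableEq α] {S U : Finset α} {a : α}
    (haS : a ∉ S) (haU : a ∉ U) : Even #(insert a S \ U) ↔ ¬ Even #(S \ U) := by
  rw [insert_sdiff_of_notMem _ haU, card_insert_of_notMem (fun h => haS (mem_sdiff.mp h).1),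
    Nat.even_add_one]

theorem Finset.card_powerset_filter_even_card_sdiff {α : Type*} [DecidableEq α]
    {E U : Finset α} {a : α} (ha : a ∈ E) (haU : a ∉ U) :
    #{S ∈ E.powerset | Even #(S \ U)} = 2 ^ (#E - 1) :=
  card_powerset_filter_of_insert_iff_not ha _ fun _ hS =>
    even_card_sdiff_insert_iff (fun h => notMem_erase a E (hS h)) haU

theorem Finset.card_powerset_filter_odd_card_sdiff {α : Type*} [DecidableEq α]
    {E U : Finset α} {a : α} (ha : a ∈ E) (haU : a ∉ U) :
    #{S ∈ E.powerset | ¬ Even #(S \ U)} = 2 ^ (#E - 1) :=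
  card_powerset_filter_of_insert_iff_not ha _ fun _ hS =>
    not_congr (even_card_sdiff_insert_iff (fun h => notMem_erase a E (hS h)) haU)

theorem Nat.four_dvd_choose_two_pow {j t : ℕ} (ht0 : t ≠ 0) (ht : t < 2 ^ j)
    (hne : t ≠ 2 ^ (j - 1)) : 4 ∣ (2 ^ j).choose t := by
  have hj : j ≠ 0 := by
    rintro rfl
    simp_all
  have hval : t.factorization 2 + 2 ≤ j := by
    by_contra! hlarge
    have hdvd : 2 ^ (j - 1) ∣ t := (pow_dvd_pow 2 (by omega)).trans (Nat.ordProj_dvd t 2)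
    obtain ⟨c, rfl⟩ := hdvd
    have hc : c < 2 := by
      refine Nat.lt_of_mul_lt_mul_left (a := 2 ^ (j - 1)) ?_
      rwa [← pow_succ, Nat.sub_add_cancel (by omega)]
    interval_cases c <;> simp_all
  rw [show 4 = 2 ^ 2 by rfl,
    Nat.prime_two.pow_dvd_iff_le_factorization (Nat.choose_pos ht.le).ne',
    Nat.factorization_choose_prime_pow Nat.prime_two ht.le ht0]
  omega

theorem Nat.choose_two_pow_half_mod_four {j : ℕ} (hj : j ≠ 0) :
    (2 ^ j).choose (2 ^ (j - 1)) % 4 = 2 := by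
  have hle : 2 ^ (j - 1) ≤ 2 ^ j := Nat.pow_le_pow_right two_pos (by omega)
  have hval : ((2 ^ j).choose (2 ^ (j - 1))).factorization 2 = 1 := by
    rw [Nat.factorization_choose_prime_pow Nat.prime_two hle (by positivity),
      Nat.factorization_pow_self Nat.prime_two]
    omega
  have hpos := (Nat.choose_pos hle).ne'
  have h2 : 2 ^ 1 ∣ (2 ^ j).choose (2 ^ (j - 1)) :=
    (Nat.prime_two.pow_dvd_iff_le_factorization hpos).mpr hval.ge
  have h4 : ¬ 2 ^ 2 ∣ (2 ^ j).choose (2 ^ (j - 1)) := by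
    rw [Nat.prime_two.pow_dvd_iff_le_factorization hpos, hval]
    omega
  omega

theorem Nat.mod_four_eq_of_cast_eq_neg_one_pow {x k : ℕ} (h : (x : ZMod 4) = (-1) ^ k) :
    x % 4 = if Even k then 1 else 3 := by
  have hcast : (x : ZMod 4) = ((if Even k then 1 else 3 : ℕ) : ZMod 4) := by
    rcases Nat.even_or_odd k with hk | hk
    · rw [h, hk.neg_one_pow, if_pos hk, Nat.cast_one]
    · rw [h, hk.neg_one_pow, if_neg (Nat.not_even_iff_odd.mpr hk)]
      rfl
  rw [ZMod.natCast_eq_natCast_iff'] at hcast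
  split_ifs at hcast ⊢ <;> simpa using hcast

theorem Equiv.Perm.exists_strictMonoOn_compl_of_card_eq {α : Type*} [Fintype α] [LinearOrder α]
    (A B : Finset α) (h : #A = #B) :
    ∃ ρ : Perm α, (∀ x, ρ x ∈ B ↔ x ∈ A) ∧ StrictMonoOn ρ A ∧ StrictMonoOn ρ (↑A)ᶜ := by
  let e : {x // x ∈ A} ≃o {x // x ∈ B} :=
    (Fintype.orderIsoFinOfCardEq _ (by simpa using h)).symm.trans
      (Fintype.orderIsoFinOfCardEq _ rfl)
  let f : {x // x ∉ A} ≃o {x // x ∉ B} :=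
    (Fintype.orderIsoFinOfCardEq _ (by simp [Fintype.card_subtype_compl, h])).symm.trans
      (Fintype.orderIsoFinOfCardEq _ rfl)
  let ρ := Equiv.subtypeCongr e.toEquiv f.toEquiv
  have hρA : ∀ x (hx : x ∈ A), ρ x = e ⟨x, hx⟩ := fun x hx => by
    simp [ρ, Equiv.subtypeCongr, sumCompl_symm_apply_of_pos hx]
  have hρAc : ∀ x (hx : x ∉ A), ρ x = f ⟨x, hx⟩ := fun x hx => by
    simp [ρ, Equiv.subtypeCongr, sumCompl_symm_apply_of_neg hx]
  refine ⟨ρ, fun x => ?_, fun x hx y hy hxy => ?_, fun x hx y hy hxy => ?_⟩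
  · by_cases hx : x ∈ A
    · simp [hρA x hx, hx]
    · simp [hρAc x hx, hx, (f ⟨x, hx⟩).2]
  · rw [hρA x hx, hρA y hy]
    exact e.strictMono hxy
  · rw [hρAc x hx, hρAc y hy]
    exact f.strictMono hxy

open Equiv

section Descents

variable {n : ℕ}

theorem descSet_subset_iff {π : Perm (Fin n)} {T : Finset ℕ} :
    descSet n π ⊆ T ↔ ∀ i (hi : i + 1 < n), i + 1 ∉ T → π ⟨i, by omega⟩ < π ⟨i + 1, hi⟩ := by
  constructor
  · intro hsub i hi hiT
    refine lt_of_le_of_ne (not_lt.mp fun hdesc => hiT (hsub ?_)) (π.injective.ne (by simp))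
    exact mem_filter.mpr ⟨mem_Icc.mpr ⟨by omega, by omega⟩, hi, hdesc⟩
  · intro hasc i hi
    obtain ⟨hiIcc, hin, hdesc⟩ := mem_filter.mp hi
    obtain ⟨k, rfl⟩ : ∃ k, i = k + 1 := ⟨i - 1, by grind⟩
    by_contra hkT
    exact (hasc k hin hkT).not_gt hdesc

theorem descSet_subset_empty_iff {π : Perm (Fin n)} : descSet n π ⊆ ∅ ↔ π = 1 := by
  rw [descSet_subset_iff]
  constructor
  · intro hasc
    have hmono : StrictMono π := by
      cases n with
      | zero => exact fun a => a.elim0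
      | succ m => exact Fin.strictMono_iff_lt_succ.mpr fun i => hasc i (by omega) (by simp)
    exact Equiv.ext (congrFun hmono.eq_id)
  · rintro rfl i hi -
    simp [Fin.lt_def]

theorem descAlpha_empty : descAlpha n ∅ = 1 := by
  rw [descAlpha, filter_congr fun π _ => descSet_subset_empty_iff, filter_eq' univ 1,
    if_pos (mem_univ _), card_singleton]

theorem descAlpha_eq_sum_descBeta (S : Finset ℕ) :
    descAlpha n S = ∑ T ∈ S.powerset, descBeta n T := by
  rw [descAlpha, card_eq_sum_card_fiberwise (f := descSet n) (t := S.powerset)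
    fun π hπ => mem_powerset.mpr (mem_filter.mp hπ).2]
  refine sum_congr rfl fun T hT => congrArg card ?_
  ext π
  simp only [mem_filter, mem_univ, true_and, and_iff_right_iff_imp]
  exact fun h => h ▸ mem_powerset.mp hT

def prefixValues (n t : ℕ) (π : Perm (Fin n)) : Finset (Fin n) :=
  ({i | (i : ℕ) < t} : Finset (Fin n)).map π.toEmbedding

def prefixFiber (n t : ℕ) (T : Finset ℕ) (A : Finset (Fin n)) : Finset (Perm (Fin n)) :=
  {π | descSet n π ⊆ T ∧ prefixValues n t π = A}

variable {t : ℕ}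

theorem apply_mem_prefixValues_iff {π : Perm (Fin n)} {i : Fin n} :
    π i ∈ prefixValues n t π ↔ (i : ℕ) < t := by
  simp [prefixValues]

theorem mem_prefixValues_one {x : Fin n} : x ∈ prefixValues n t 1 ↔ (x : ℕ) < t :=
  apply_mem_prefixValues_iff (π := 1)

theorem prefixValues_mul (ρ π : Perm (Fin n)) :
    prefixValues n t (ρ * π) = (prefixValues n t π).map ρ.toEmbedding := by
  rw [prefixValues, prefixValues, map_map]
  rfl

theorem card_prefixValues (ht : t ≤ n) (π : Perm (Fin n)) : #(prefixValues n t π) = t := by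
  rw [prefixValues, card_map, Fin.card_filter_val_lt, min_eq_right ht]

theorem mul_mem_prefixFiber {T : Finset ℕ} (ht : t ∈ T) {A B : Finset (Fin n)}
    {ρ : Perm (Fin n)} (hρ : ∀ x, ρ x ∈ B ↔ x ∈ A) (hA : StrictMonoOn ρ A)
    (hAc : StrictMonoOn ρ (↑A)ᶜ) {π : Perm (Fin n)} (hπ : π ∈ prefixFiber n t T A) :
    ρ * π ∈ prefixFiber n t T B := by
  simp only [prefixFiber, mem_filter, mem_univ, true_and] at hπ ⊢
  obtain ⟨hdesc, rfl⟩ := hπ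
  refine ⟨descSet_subset_iff.mpr fun i hi hiT => ?_, ?_⟩
  · have hlt := descSet_subset_iff.mp hdesc i hi hiT
    rcases lt_or_gt_of_ne (fun h : i + 1 = t => hiT (h ▸ ht)) with hlow | hhigh
    · exact hA (apply_mem_prefixValues_iff.mpr (by dsimp only; omega))
        (apply_mem_prefixValues_iff.mpr (by dsimp only; omega)) hlt
    · exact hAc (mt apply_mem_prefixValues_iff.mp (by dsimp only; omega))
        (mt apply_mem_prefixValues_iff.mp (by dsimp only; omega)) hlt
  · ext x
    obtain ⟨y, rfl⟩ := ρ.surjective x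
    rw [prefixValues_mul, mem_map_equiv, Equiv.symm_apply_apply, hρ]

theorem card_prefixFiber_le {T : Finset ℕ} (ht : t ∈ T) {A B : Finset (Fin n)}
    (h : #A = #B) : #(prefixFiber n t T A) ≤ #(prefixFiber n t T B) := by
  obtain ⟨ρ, hρ, hA, hAc⟩ := Perm.exists_strictMonoOn_compl_of_card_eq A B h
  exact card_le_card_of_injOn (ρ * ·) (fun π hπ => mul_mem_prefixFiber ht hρ hA hAc hπ)
    (mul_right_injective ρ).injOn

theorem descAlpha_eq_choose_mul {T : Finset ℕ} (ht : t ∈ T) (htn : t ≤ n) :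
    descAlpha n T = n.choose t * #(prefixFiber n t T (prefixValues n t 1)) := by
  rw [descAlpha, card_eq_sum_card_fiberwise (f := prefixValues n t) (t := powersetCard t univ)
    fun π _ => mem_powersetCard.mpr ⟨subset_univ _, card_prefixValues htn π⟩,
    sum_const_nat, card_powersetCard, card_univ, Fintype.card_fin]
  intro A hA
  rw [filter_filter]
  replace hA := (mem_powersetCard.mp hA).2
  exact le_antisymm (card_prefixFiber_le ht (by rw [hA, card_prefixValues htn]))
    (card_prefixFiber_le ht (by rw [hA, card_prefixValues htn]))

theorem choose_dvd_descAlpha {T : Finset ℕ} (ht : t ∈ T) (htn : t ≤ n) :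
    n.choose t ∣ descAlpha n T :=
  Dvd.intro _ (descAlpha_eq_choose_mul ht htn).symm

theorem prefixFiber_singleton : prefixFiber n t {t} (prefixValues n t 1) = {1} := by
  ext π
  simp only [prefixFiber, mem_filter, mem_univ, true_and, mem_singleton]
  constructor
  · rintro ⟨hdesc, hvals⟩
    refine descSet_subset_empty_iff.mp (descSet_subset_iff.mpr fun i hi _ => ?_)
    by_cases hit : i + 1 = t
    · have hlow : π ⟨i, by omega⟩ ∈ prefixValues n t 1 :=
        hvals ▸ apply_mem_prefixValues_iff.mpr (by dsimp only; omega)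
      have hhigh : π ⟨i + 1, hi⟩ ∉ prefixValues n t 1 :=
        hvals ▸ mt apply_mem_prefixValues_iff.mp (by dsimp only; omega)
      rw [mem_prefixValues_one] at hlow hhigh
      exact Fin.lt_def.mpr (by omega)
    · exact descSet_subset_iff.mp hdesc i hi (by simpa using hit)
  · rintro rfl
    exact ⟨descSet_subset_empty_iff.mpr rfl |>.trans (empty_subset _), rfl⟩

theorem descAlpha_singleton (ht : t ≤ n) : descAlpha n {t} = n.choose t := by
  rw [descAlpha_eq_choose_mul (mem_singleton_self t) ht, prefixFiber_singleton,
    card_singleton, mul_one]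

theorem descAlpha_cast_zmod_four {j : ℕ} (hn : n = 2 ^ j) {T : Finset ℕ}
    (hT : T ⊆ Icc 1 (n - 1)) :
    (descAlpha n T : ZMod 4) = (if T = ∅ then 1 else 0) + (if T = {n / 2} then 2 else 0) := by
  by_cases hT0 : T = ∅
  · simp [hT0, descAlpha_empty]
  obtain ⟨s, hs⟩ := nonempty_iff_ne_empty.mpr hT0
  have hj : j ≠ 0 := by
    rintro rfl
    have := mem_Icc.mp (hT hs)
    simp_all
  have hhalf : n / 2 = 2 ^ (j - 1) := by
    rw [hn, ← Nat.pow_div (by omega) two_pos, pow_one]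
  rw [if_neg hT0, zero_add]
  by_cases hTm : T = {n / 2}
  · rw [if_pos hTm, hTm, descAlpha_singleton (by omega), hhalf, hn,
      ← ZMod.natCast_mod, Nat.choose_two_pow_half_mod_four hj]
    rfl
  obtain ⟨t, htT, htm⟩ : ∃ t ∈ T, t ≠ n / 2 := by
    by_contra! hall
    exact hTm (eq_singleton_iff_unique_mem.mpr ⟨hall s hs ▸ hs, hall⟩)
  have ht := mem_Icc.mp (hT htT)
  rw [if_neg hTm, ZMod.natCast_eq_zero_iff]
  refine dvd_trans ?_ (choose_dvd_descAlpha htT (by omega))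
  rw [hn] at ht ⊢
  exact Nat.four_dvd_choose_two_pow (by omega) (by omega) (hhalf ▸ htm)

theorem descBeta_cast_zmod_four {j : ℕ} (hn : n = 2 ^ j) {S : Finset ℕ}
    (hS : S ⊆ Icc 1 (n - 1)) : (descBeta n S : ZMod 4) = (-1) ^ #(S \ {n / 2}) := by
  have halpha : ∀ T ∈ S.powerset, ∑ U ∈ T.powerset, (descBeta n U : ZMod 4)
      = (if T = ∅ then 1 else 0) + (if T = {n / 2} then 2 else 0) := fun T hT => by
    rw [← descAlpha_cast_zmod_four hn ((mem_powerset.mp hT).trans hS), descAlpha_eq_sum_descBeta]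
    push_cast
    rfl
  rw [← sum_powerset_neg_one_pow_card_sdiff_mul_sum (fun U => (descBeta n U : ZMod 4)) S,
    sum_congr rfl fun T hT => by rw [halpha T hT]]
  simp only [mul_add, mul_ite, mul_zero, sum_add_distrib, sum_ite_eq', mem_powerset,
    empty_subset, if_true, sdiff_empty, singleton_subset_iff, mul_one]
  by_cases hm : n / 2 ∈ S
  · rw [if_pos hm, sdiff_singleton_eq_erase, ← card_erase_add_one hm, pow_succ]
    ring
  · rw [if_neg hm, sdiff_singleton_eq_erase, erase_eq_of_notMem hm, add_zero]

end Descents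

/-- For `n = 2^j ≥ 4`, `β_n(S) ≡ (-1)^{|S \ {n/2}|} (mod 4)`, and exactly half of the
subsets give residue 1 and the other half residue 3 modulo 4. -/
theorem stmt_10 (n j : ℕ) (h : n = 2 ^ j) (h4 : 4 ≤ n) :
    (∀ S ⊆ Finset.Icc 1 (n - 1),
        descBeta n S % 4 = if Even ((S \ {n / 2}).card) then 1 else 3) ∧
    ((Finset.Icc 1 (n - 1)).powerset.filter (fun S => descBeta n S % 4 = 1)).card
        = 2 ^ (n - 2) ∧
    ((Finset.Icc 1 (n - 1)).powerset.filter (fun S => descBeta n S % 4 = 3)).card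
        = 2 ^ (n - 2) := by
  have hmod : ∀ S ⊆ Icc 1 (n - 1), descBeta n S % 4 = if Even #(S \ {n / 2}) then 1 else 3 :=
    fun S hS => Nat.mod_four_eq_of_cast_eq_neg_one_pow (descBeta_cast_zmod_four h hS)
  have h1 : 1 ∈ Icc 1 (n - 1) := mem_Icc.mpr ⟨le_rfl, by omega⟩
  have h1m : 1 ∉ ({n / 2} : Finset ℕ) := by rw [mem_singleton]; omega
  have hcard : #(Icc 1 (n - 1)) - 1 = n - 2 := by rw [Nat.card_Icc]; omega
  refine ⟨hmod, ?_, ?_⟩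
  · rw [← hcard, ← card_powerset_filter_even_card_sdiff h1 h1m]
    refine congrArg card (filter_congr fun S hS => ?_)
    rw [hmod S (mem_powerset.mp hS)]
    split_ifs with he <;> simp [he]
  · rw [← hcard, ← card_powerset_filter_odd_card_sdiff h1 h1m]
    refine congrArg card (filter_congr fun S hS => ?_)
    rw [hmod S (mem_powerset.mp hS)]
    split_ifs with he <;> simp [he]
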